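/- Let L, H : E × E → ℝ be differentiable functions satisfying the Legendre identity ∇_qH(q, ∇_vL(q,v)) = −∇_qL(q,v) for all (q,v) ∈ E × E. Let X : E → E and α : E → E be differentiable maps related by the Legendre transformation: α q = ∇_vL(q, X q) and X q = ∇_pH(q, α q) for all q. Then α is a solution of the generalized Hamiltonian Hamilton–Jacobi problem, i.e. fderiv α q (X q) = −∇_qH(q, α q) for all q, if and only if X is a solution of the generalized Lagrangian Hamilton–Jacobi problem, i.e. fderiv (fun q' => ∇_vL(q', X q')) q (X q) = ∇_qL(q, X q) for all q. -/

import Mathlib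

open scoped Gradient

/-- The gradient at `q` of the partial map `q' ↦ F (q', w)`. -/
noncomputable def gradQ {n : ℕ}
    (F : EuclideanSpace ℝ (Fin n) × EuclideanSpace ℝ (Fin n) → ℝ)
    (q w : EuclideanSpace ℝ (Fin n)) : EuclideanSpace ℝ (Fin n) :=
  ∇ (fun q' => F (q', w)) q

/-- The gradient at `w` of the partial map `w' ↦ F (q, w')` (used for `∇ₚH` and `∇ᵥL`). -/
noncomputable def gradSnd {n : ℕ}
    (F : EuclideanSpace ℝ (Fin n) × EuclideanSpace ℝ (Fin n) → ℝ)
    (q w : EuclideanSpace ℝ (Fin n)) : EuclideanSpace ℝ (Fin n) :=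
  ∇ (fun w' => F (q, w')) w

theorem fderiv_apply_eq_neg_gradQ_iff {n : ℕ}
    {L H : EuclideanSpace ℝ (Fin n) × EuclideanSpace ℝ (Fin n) → ℝ}
    (hLegendre : ∀ q v, gradQ H q (gradSnd L q v) = - gradQ L q v)
    {X α : EuclideanSpace ℝ (Fin n) → EuclideanSpace ℝ (Fin n)}
    (hFL : α = fun q => gradSnd L q (X q)) (q : EuclideanSpace ℝ (Fin n)) :
    fderiv ℝ α q (X q) = - gradQ H q (α q) ↔
      fderiv ℝ (fun q' => gradSnd L q' (X q')) q (X q) = gradQ L q (X q) := by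
  subst hFL
  rw [hLegendre, neg_neg]

theorem genHJ_lagrangian_iff_hamiltonian_general {n : ℕ}
    (L H : EuclideanSpace ℝ (Fin n) × EuclideanSpace ℝ (Fin n) → ℝ)
    (hLegendre : ∀ q v, gradQ H q (gradSnd L q v) = - gradQ L q v)
    (X α : EuclideanSpace ℝ (Fin n) → EuclideanSpace ℝ (Fin n))
    (hFL : ∀ q, α q = gradSnd L q (X q)) :
    (∀ q, fderiv ℝ α q (X q) = - gradQ H q (α q)) ↔
    (∀ q, fderiv ℝ (fun q' => gradSnd L q' (X q')) q (X q) = gradQ L q (X q)) :=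
  forall_congr' (fderiv_apply_eq_neg_gradQ_iff hLegendre (funext hFL))

/-- Given a Lagrangian `L` and a Hamiltonian `H` satisfying the Legendre identity
`∇_qH (q, ∇ᵥL (q, v)) = -∇_qL (q, v)`, and vector field `X` and 1-form `α` related by the
Legendre transformation, `α` solves the generalized Hamiltonian Hamilton–Jacobi problem
iff `X` solves the generalized Lagrangian Hamilton–Jacobi problem. -/
theorem genHJ_lagrangian_iff_hamiltonian {n : ℕ}
    (L H : EuclideanSpace ℝ (Fin n) × EuclideanSpace ℝ (Fin n) → ℝ)
    (hL : Differentiable ℝ L) (hH : Differentiable ℝ H)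
    (hLegendre : ∀ q v, gradQ H q (gradSnd L q v) = - gradQ L q v)
    (X α : EuclideanSpace ℝ (Fin n) → EuclideanSpace ℝ (Fin n))
    (hXdiff : ∀ q, DifferentiableAt ℝ X q) (hαdiff : ∀ q, DifferentiableAt ℝ α q)
    (hFL : ∀ q, α q = gradSnd L q (X q))
    (hFLinv : ∀ q, X q = gradSnd H q (α q)) :
    (∀ q, fderiv ℝ α q (X q) = - gradQ H q (α q)) ↔
    (∀ q, fderiv ℝ (fun q' => gradSnd L q' (X q')) q (X q) = gradQ L q (X q)) :=
  genHJ_lagrangian_iff_hamiltonian_general L H hLegendre X α hFL
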